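/- Let F ≤ Sym({1,…,8}) be the subgroup generated by the permutations (1 2 3)(4 5 6) and (1 4)(2 5)(3 7)(6 8), and let F(2) ≤ F be a 2-Sylow subgroup of F. Then F(2) has order 8, acts regularly on the 8 points (i.e., F(2) is transitive with trivial point stabilizers), and is self-normalizing in F, i.e., N_F(F(2)) = F(2). -/

import Mathlib

/-- `H` is a `p`-Sylow subgroup of `K` (both subgroups of an ambient group `G`):
`H` is a `p`-subgroup of `K` that is maximal among `p`-subgroups of `K`. -/
def IsSylowIn {G : Type*} [Group G] (p : ℕ) (H K : Subgroup G) : Prop :=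
  H ≤ K ∧ IsPGroup p H ∧
    ∀ Q : Subgroup G, Q ≤ K → IsPGroup p Q → H ≤ Q → Q = H

/-- The permutation `(1 2 3)(4 5 6)` of `{1,…,8}`, realized on `Fin 8` (0-indexed). -/
def genA : Equiv.Perm (Fin 8) :=
  ([0, 1, 2] : List (Fin 8)).formPerm * ([3, 4, 5] : List (Fin 8)).formPerm

/-- The permutation `(1 4)(2 5)(3 7)(6 8)` of `{1,…,8}`, realized on `Fin 8` (0-indexed). -/
def genB : Equiv.Perm (Fin 8) :=
  ([0, 3] : List (Fin 8)).formPerm * ([1, 4] : List (Fin 8)).formPerm *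
    ([2, 6] : List (Fin 8)).formPerm * ([5, 7] : List (Fin 8)).formPerm

/-!
`F` has order 24 and its point stabilisers have exponent 3; both facts are checked by computing
`F` as the set of products of at most seven generators. So a Sylow 2-subgroup has order 8 and
meets every point stabiliser trivially; acting freely on 8 points with 8 elements, it acts
regularly. Its index 3 is prime, so its normaliser is either itself or all of `F`. The latter
would make it normal, and then it would contain the involution `genB` together with its
conjugates, hence the commutator `⁅genB, genA⁆`, which has order 3.
-/

open Pointwise Subgroup MulAction
open scoped commutatorElement

theorem Subgroup.coe_closure_eq_pow_of_mul_subset {G : Type*} [Group G] [Finite G]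
    [DecidableEq G] {s : Finset G} {n : ℕ} (h : (insert 1 s) ^ n * s ⊆ (insert 1 s) ^ n) :
    (closure (s : Set G) : Set G) = ↑((insert 1 s) ^ n) := by
  refine subset_antisymm (fun g hg => ?_) ?_
  · rw [SetLike.mem_coe, ← mem_toSubmonoid, closure_toSubmonoid_of_finite] at hg
    induction hg using Submonoid.closure_induction_right with
    | one => exact Finset.one_mem_pow (Finset.mem_insert_self 1 s)
    | mul_right x _ y hy ih => exact h (Finset.mul_mem_mul ih hy)
  · rw [Finset.coe_pow, Finset.coe_insert]
    exact pow_subset (Set.insert_subset (one_mem _) subset_closure)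

theorem Subgroup.normalizer_eq_self_of_index_prime {G : Type*} [Group G] {H : Subgroup G}
    (hH : H.index.Prime) (hn : ¬ H.Normal) : normalizer (H : Set G) = H := by
  have h := relIndex_mul_index H.le_normalizer
  rcases hH.eq_one_or_self_of_dvd _ (Dvd.intro_left _ h) with h1 | hq
  · exact absurd (normalizer_eq_top_iff.mp (index_eq_one.mp h1)) hn
  · rw [hq, Nat.mul_eq_right hH.ne_zero, relIndex_eq_one] at h
    exact le_antisymm h H.le_normalizer

theorem Subgroup.inf_normalizer_eq_of_normalizer_subgroupOf {G : Type*} [Group G]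
    {H K : Subgroup G} (hHK : H ≤ K)
    (h : normalizer (H.subgroupOf K : Set K) = H.subgroupOf K) :
    K ⊓ normalizer (H : Set G) = H := by
  rw [← subgroupOf_normalizer_eq hHK, subgroupOf_inj] at h
  rw [inf_comm, h, inf_eq_left.mpr hHK]

theorem IsPGroup.eq_one_of_pow_eq_one {p n : ℕ} {G : Type*} [Group G] (hG : IsPGroup p G)
    (hn : p.Coprime n) {g : G} (hg : g ^ n = 1) : g = 1 :=
  orderOf_eq_one_iff.mp ((hG.orderOf_coprime hn g).eq_one_of_dvd (orderOf_dvd_of_pow_eq_one hg))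

theorem Sylow.card_eq_of_card_eq_pow_mul {G : Type*} [Group G] [Finite G] {p n m : ℕ}
    [hp : Fact p.Prime] (P : Sylow p G) (hG : Nat.card G = p ^ n * m) (hm : ¬ p ∣ m) :
    Nat.card P = p ^ n := by
  have hm0 : m ≠ 0 := by rintro rfl; exact hm (dvd_zero p)
  rw [P.card_eq_multiplicity, hG, Nat.factorization_mul (pow_ne_zero n hp.out.ne_zero) hm0,
    Finsupp.add_apply, hp.out.factorization_pow, Finsupp.single_eq_same,
    Nat.factorization_eq_zero_of_not_dvd hm, add_zero]

theorem Sylow.mem_of_normal_of_pow_eq_one {G : Type*} [Group G] {p k : ℕ} [Fact p.Prime]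
    (P : Sylow p G) [(P : Subgroup G).Normal] {g : G} (hg : g ^ p ^ k = 1) : g ∈ P := by
  have hg' : IsPGroup p (zpowers g) :=
    IsPGroup.of_card_dvd_pow (n := k) (Nat.card_zpowers g ▸ orderOf_dvd_of_pow_eq_one hg)
  obtain ⟨Q, hQ⟩ := hg'.exists_le_sylow
  have hQP : (Q : Subgroup G) = P := P.is_maximal' Q.isPGroup' (P.isPGroup'.le_sylow_of_normal Q)
  show g ∈ (P : Subgroup G)
  exact hQP ▸ hQ (mem_zpowers g)

theorem MulAction.isPretransitive_of_stabilizer_eq_bot {G X : Type*} [Group G] [MulAction G X]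
    [Finite X] (x : X) (hx : stabilizer G x = ⊥) (hcard : Nat.card G = Nat.card X) :
    IsPretransitive G X := by
  rw [isPretransitive_iff_orbit_eq_univ x, Set.eq_univ_iff_ncard, ← index_stabilizer, hx,
    index_bot, hcard]

def IsSylowIn.toSylow {G : Type*} [Group G] {p : ℕ} {H K : Subgroup G} (h : IsSylowIn p H K) :
    Sylow p K where
  toSubgroup := H.subgroupOf K
  isPGroup' := h.2.1.of_equiv (subgroupOfEquivOfLe h.1).symm
  is_maximal' {Q} hQ hHQ := by
    have hmax := h.2.2 (Q.map K.subtype) (map_subtype_le Q) (hQ.map K.subtype) <| by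
      simpa only [subgroupOf_map_subtype, inf_eq_left.mpr h.1] using map_mono (f := K.subtype) hHQ
    rw [← hmax]
    exact (comap_map_eq_self_of_injective K.subtype_injective Q).symm

def genProducts : Finset (Equiv.Perm (Fin 8)) := {1, genA, genB} ^ 7

set_option maxRecDepth 100000 in
theorem genProducts_mul_subset : genProducts * {genA, genB} ⊆ genProducts := by
  decide

theorem coe_closure_gen : (closure {genA, genB} : Set (Equiv.Perm (Fin 8))) = genProducts := by
  have h := coe_closure_eq_pow_of_mul_subset genProducts_mul_subset
  rwa [Finset.coe_insert, Finset.coe_singleton] at h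

set_option maxRecDepth 100000 in
theorem card_closure_gen :
    Nat.card (closure {genA, genB} : Subgroup (Equiv.Perm (Fin 8))) = 24 := by
  rw [← SetLike.coe_sort_coe, coe_closure_gen, Nat.card_coe_set_eq, Set.ncard_coe_finset]
  decide

set_option maxRecDepth 100000 in
theorem pow_three_eq_one_of_mem_closure_gen {g : Equiv.Perm (Fin 8)}
    (hg : g ∈ closure {genA, genB}) {ω : Fin 8} (hω : g ω = ω) : g ^ 3 = 1 := by
  have h : {g ∈ genProducts | ∃ ω, g ω = ω} ⊆ {g ∈ genProducts | g ^ 3 = 1} := by decide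
  rw [← SetLike.mem_coe, coe_closure_gen, Finset.mem_coe] at hg
  exact (Finset.mem_filter.mp (h (Finset.mem_filter.mpr ⟨hg, ω, hω⟩))).2

theorem genB_sq : genB ^ 2 = 1 := by decide

set_option maxRecDepth 10000 in
theorem commutator_genB_genA_pow_three : ⁅genB, genA⁆ ^ 3 = 1 := by decide

set_option maxRecDepth 10000 in
theorem commutator_genB_genA_ne_one : ⁅genB, genA⁆ ≠ 1 := by decide

theorem sylow_two_closure_gen_not_normal (P : Sylow 2 (closure {genA, genB})) :
    ¬ (P : Subgroup (closure {genA, genB})).Normal := by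
  intro hP
  let a : closure {genA, genB} := ⟨genA, subset_closure (by simp)⟩
  let b : closure {genA, genB} := ⟨genB, subset_closure (by simp)⟩
  have hb : b ∈ P := P.mem_of_normal_of_pow_eq_one (k := 1) <| Subtype.ext <| by
    rw [SubmonoidClass.coe_pow, OneMemClass.coe_one]
    exact genB_sq
  have hc : ⁅b, a⁆ ∈ P := by
    simpa only [commutatorElement_def, mul_assoc] using mul_mem hb (hP.conj_mem _ (inv_mem hb) a)
  have hc3 : (⟨_, hc⟩ : P) ^ 3 = 1 := Subtype.ext <| Subtype.ext <| by
    simp only [SubmonoidClass.coe_pow, OneMemClass.coe_one, commutatorElement_def, coe_mul, coe_inv]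
    exact commutator_genB_genA_pow_three
  have h1 := congrArg (fun x : P => ((x : closure {genA, genB}) : Equiv.Perm (Fin 8)))
    (P.isPGroup'.eq_one_of_pow_eq_one (by norm_num) hc3)
  simp only [OneMemClass.coe_one] at h1
  exact commutator_genB_genA_ne_one h1

/-- For `F = ⟨(1 2 3)(4 5 6), (1 4)(2 5)(3 7)(6 8)⟩ ≤ Sym({1,…,8})`, any `2`-Sylow
subgroup `F(2)` of `F` has order `8`, acts regularly on the `8` points (transitively with
trivial point stabilizers), and is self-normalizing in `F`: `N_F(F(2)) = F(2)`. -/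
theorem stmt13 (F F2 : Subgroup (Equiv.Perm (Fin 8)))
    (hF : F = Subgroup.closure {genA, genB})
    (hSylow : IsSylowIn 2 F2 F) :
    Nat.card F2 = 8 ∧ MulAction.IsPretransitive F2 (Fin 8) ∧
      (∀ ω : Fin 8, F2 ⊓ MulAction.stabilizer (Equiv.Perm (Fin 8)) ω = ⊥) ∧
      F ⊓ Subgroup.normalizer (F2 : Set (Equiv.Perm (Fin 8))) = F2 := by
  subst hF
  let P := hSylow.toSylow
  have hP : Nat.card P = 8 :=
    P.card_eq_of_card_eq_pow_mul (n := 3) (m := 3) card_closure_gen (by norm_num)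
  have hcard : Nat.card F2 = 8 :=
    (Nat.card_congr (subgroupOfEquivOfLe hSylow.1).toEquiv).symm.trans hP
  have hfree : ∀ g ∈ F2, ∀ ω : Fin 8, g ω = ω → g = 1 := fun g hg ω hω =>
    congrArg Subtype.val <| hSylow.2.1.eq_one_of_pow_eq_one (n := 3) (by norm_num)
      (g := ⟨g, hg⟩) (Subtype.ext (pow_three_eq_one_of_mem_closure_gen (hSylow.1 hg) hω))
  have hindex : (P : Subgroup (closure {genA, genB})).index = 3 := by
    have h := index_mul_card (P : Subgroup (closure {genA, genB}))
    change _ * Nat.card P = _ at h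
    rw [hP, card_closure_gen] at h
    omega
  have hstab : ∀ ω : Fin 8, stabilizer F2 ω = ⊥ := fun ω =>
    (eq_bot_iff_forall _).mpr fun g hg => Subtype.ext (hfree g g.2 ω hg)
  exact ⟨hcard, isPretransitive_of_stabilizer_eq_bot 0 (hstab 0) (by simp [hcard]),
    fun ω => (eq_bot_iff_forall _).mpr fun g hg => hfree g hg.1 ω hg.2,
    inf_normalizer_eq_of_normalizer_subgroupOf hSylow.1
      (normalizer_eq_self_of_index_prime (hindex ▸ Nat.prime_three)
        (sylow_two_closure_gen_not_normal P))⟩
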